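/- arXiv:2001.06032 — 4 statements merged into one kernel-verified Lean document; each statement's English description precedes it below -/
import Mathlib

section
/- Let $r\geq 2$ and $n\in\mathbb{N}$. Let $\widehat{v}=[\widehat{v_1},\ldots,\widehat{v_r}]$ be a $1\times r$ row vector of $2\pi$-periodic trigonometric polynomials with $\widehat{v}(0)\neq 0$. Then there exists an $r\times r$ matrix $\widehat{U}$ of $2\pi$-periodic trigonometric polynomials with $\det(\widehat{U}(\xi))=1$ for all $\xi$ (hence $\widehat{U}$ is strongly invertible) such that $\widehat{v}(\xi)\widehat{U}(\xi)=[1,0,\ldots,0]+O(|\xi|^n)$ as $\xi\to 0$. -/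
/-!
Read a trigonometric polynomial as a Laurent polynomial in `T = e^{-iξ}` and send it to its
Taylor jet of order `n` at `ξ = 0`, a class in `ℂ⟦X⟧ ⧸ (X ^ n)`; equal jets give equal derivatives
up to order `n - 1`. A Laurent polynomial `f` with `f(0) ≠ 0` has jet `f(0) + (nilpotent)`, a unit
in the ring of jets of Laurent polynomials. Over that ring, a row with a unit entry `a` at `i` is
brought to `e₀` by column operations `t ↦ t + tᵢ • c` (`cᵢ = 0`), which lift to determinant-one
matrices of Laurent polynomials: clear the other entries using `a`, write `a · a⁻¹ = 1` into a
second position `j`, and use it to clear position `i`.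
-/

/-- The symbol of a finitely supported scalar sequence (trigonometric polynomial). -/
noncomputable def trigSym (c : ℤ →₀ ℂ) (ξ : ℝ) : ℂ :=
  c.sum fun k a => a * Complex.exp (-Complex.I * (k : ℂ) * (ξ : ℂ))

/-- The symbol of a finitely supported matrix-valued sequence. -/
noncomputable def trigSymM {α β : Type*} (U : ℤ →₀ Matrix α β ℂ) (ξ : ℝ) : Matrix α β ℂ :=
  U.sum fun k A => Complex.exp (-Complex.I * (k : ℂ) * (ξ : ℂ)) • A

/-- `f(ξ) = g(ξ) + O(|ξ|^n)` as `ξ → 0`: derivatives at `0` agree up to order `n-1`. -/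
def derivsMatch (n : ℕ) (f g : ℝ → ℂ) : Prop :=
  ∀ j < n, iteratedDeriv j f 0 = iteratedDeriv j g 0

open Matrix

section ColumnOperations

variable {A B ι : Type*} [CommRing A] [CommRing B] [Fintype ι] [DecidableEq ι]

def SLReachable (ε : A →+* B) (t t' : ι → B) : Prop :=
  ∃ U : Matrix ι ι A, U.det = 1 ∧ t ᵥ* U.map ε = t'

namespace SLReachable

variable {ε : A →+* B} {t t' t'' : ι → B}

theorem trans (h : SLReachable ε t t') (h' : SLReachable ε t' t'') : SLReachable ε t t'' := by
  obtain ⟨U, hU, rfl⟩ := h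
  obtain ⟨V, hV, rfl⟩ := h'
  exact ⟨U * V, by rw [Matrix.det_mul, hU, hV, one_mul], by
    rw [Matrix.map_mul, Matrix.vecMul_vecMul]⟩

theorem self_add_smul (hε : Function.Surjective ε) (i : ι) {c : ι → B} (hc : c i = 0) :
    SLReachable ε t (t + t i • c) := by
  set d : ι → A := Function.update (fun k => Function.surjInv hε (c k)) i 0
  have hd : ε ∘ d = c := by
    ext k
    rcases eq_or_ne k i with rfl | hk
    · simp [d, hc]
    · simp [d, hk, Function.surjInv_eq hε]
  refine ⟨1 + vecMulVec (Pi.single i 1) d, ?_, ?_⟩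
  · rw [vecMulVec_eq Unit, det_one_add_replicateCol_mul_replicateRow, dotProduct_single]
    simp [d]
  · have hmap : (vecMulVec (Pi.single i 1) d).map ε = vecMulVec (Pi.single i 1) c := by
      ext k l
      simp [vecMulVec, Pi.single_apply, apply_ite ε, ← hd]
    rw [← RingHom.mapMatrix_apply, map_add, map_one, RingHom.mapMatrix_apply, hmap, vecMul_add,
      vecMul_one, vecMul_vecMulVec, dotProduct_single, mul_one]

theorem single_one_of_ne (hε : Function.Surjective ε) {i j : ι} (hij : i ≠ j)
    (ht : IsUnit (t i)) : SLReachable ε t (Pi.single j 1) := by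
  obtain ⟨u, hu⟩ := ht
  have eliminate : SLReachable ε t (Pi.single i (t i)) := by
    convert self_add_smul hε i (c := Function.update (fun k => -(↑u⁻¹ * t k)) i 0) (by simp) using 1
    ext k
    rcases eq_or_ne k i with rfl | hk
    · simp
    · simp [hk, ← hu]
  have raise : SLReachable ε (Pi.single i (t i)) (Pi.single i (t i) + Pi.single j 1) := by
    convert self_add_smul hε i (c := Pi.single j ↑u⁻¹) (by simp [hij]) using 1
    rw [Pi.single_eq_same, ← Pi.single_smul', smul_eq_mul, ← hu, Units.mul_inv]
  have drop : SLReachable ε (Pi.single i (t i) + Pi.single j 1) (Pi.single j 1) := by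
    convert self_add_smul hε j (c := Pi.single i (-t i)) (by simp [hij]) using 1
    simp [hij, Pi.single_neg]
  exact eliminate.trans (raise.trans drop)

theorem single_one [Nontrivial ι] (hε : Function.Surjective ε) {i : ι} (ht : IsUnit (t i))
    (j : ι) : SLReachable ε t (Pi.single j 1) := by
  rcases eq_or_ne i j with rfl | hij
  · obtain ⟨k, hk⟩ := exists_ne i
    exact (single_one_of_ne hε hk.symm ht).trans (single_one_of_ne hε hk (by simp))
  · exact single_one_of_ne hε hij ht

end SLReachable

end ColumnOperations

open scoped Nat
open Complex PowerSeries LaurentPolynomial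

noncomputable section

namespace TrigPoly

def expCharacter (ξ : ℝ) : Multiplicative ℤ →* ℂ where
  toFun k := exp (-I * (k.toAdd : ℂ) * ξ)
  map_one' := by simp
  map_mul' k l := by rw [← exp_add, toAdd_mul]; push_cast; ring_nf

def evalHom (ξ : ℝ) : ℂ[T;T⁻¹] →ₐ[ℂ] ℂ := AddMonoidAlgebra.lift ℂ ℂ ℤ (expCharacter ξ)

theorem trigSym_eq_evalHom (f : ℂ[T;T⁻¹]) (ξ : ℝ) : trigSym f.coeff ξ = evalHom ξ f := by
  simp [evalHom, AddMonoidAlgebra.lift_apply, trigSym, expCharacter, smul_eq_mul]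

def expSeriesCharacter : Multiplicative ℤ →* ℂ⟦X⟧ where
  toFun k := rescale (-I * (k.toAdd : ℂ)) (PowerSeries.exp ℂ)
  map_one' := by simp
  map_mul' k l := by rw [exp_mul_exp_eq_exp_add, toAdd_mul]; push_cast; ring_nf

def taylor : ℂ[T;T⁻¹] →ₐ[ℂ] ℂ⟦X⟧ := AddMonoidAlgebra.lift ℂ ℂ⟦X⟧ ℤ expSeriesCharacter

theorem factorial_mul_coeff_taylor (f : ℂ[T;T⁻¹]) (j : ℕ) :
    (j ! : ℂ) * coeff j (taylor f) = f.coeff.sum fun k a => a * (-I * k) ^ j := by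
  rw [taylor, AddMonoidAlgebra.lift_apply, map_finsuppSum, Finsupp.mul_sum]
  refine Finsupp.sum_congr fun k _ => ?_
  rw [coeff_smul, smul_eq_mul, expSeriesCharacter, MonoidHom.coe_mk, OneHom.coe_mk, coeff_rescale,
    coeff_exp, eq_ratCast, toAdd_ofAdd]
  have : (j ! : ℂ) ≠ 0 := Nat.cast_ne_zero.mpr j.factorial_ne_zero
  push_cast
  field_simp

theorem iteratedDeriv_trigSym (c : ℤ →₀ ℂ) (j : ℕ) :
    iteratedDeriv j (trigSym c) =
      fun ξ : ℝ => c.sum fun k a => a * (-I * k) ^ j * exp (-I * k * ξ) := by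
  induction j with
  | zero => ext ξ; simp [trigSym]
  | succ j ih =>
    ext ξ
    rw [iteratedDeriv_succ, ih]
    refine (HasDerivAt.fun_sum fun k _ => ?_).deriv
    have := (((hasDerivAt_id ξ).ofReal_comp.const_mul (-I * k)).cexp).const_mul
      (c k * (-I * k) ^ j)
    refine this.congr_deriv ?_
    simp only [id_eq, ofReal_one]
    ring

theorem iteratedDeriv_trigSym_apply_zero (f : ℂ[T;T⁻¹]) (j : ℕ) :
    iteratedDeriv j (trigSym f.coeff) 0 = j ! * coeff j (taylor f) := by
  simp [iteratedDeriv_trigSym, factorial_mul_coeff_taylor]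

def jet (n : ℕ) : ℂ[T;T⁻¹] →+* ℂ⟦X⟧ ⧸ Ideal.span {(X : ℂ⟦X⟧) ^ n} :=
  (Ideal.Quotient.mk _).comp taylor

theorem derivsMatch_of_jet_eq {n : ℕ} {f g : ℂ[T;T⁻¹]} (h : jet n f = jet n g) :
    derivsMatch n (fun ξ => evalHom ξ f) (fun ξ => evalHom ξ g) := by
  intro j hj
  simp only [← trigSym_eq_evalHom]
  have hdvd : X ^ n ∣ taylor f - taylor g :=
    Ideal.mem_span_singleton.mp (Ideal.Quotient.eq.mp h)
  have hcoeff : coeff j (taylor f) = coeff j (taylor g) := by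
    rw [← sub_eq_zero, ← map_sub]
    exact X_pow_dvd_iff.mp hdvd j hj
  rw [iteratedDeriv_trigSym_apply_zero, iteratedDeriv_trigSym_apply_zero, hcoeff]

theorem constantCoeff_taylor (f : ℂ[T;T⁻¹]) : constantCoeff (taylor f) = evalHom 0 f := by
  simpa [trigSym_eq_evalHom] using (iteratedDeriv_trigSym_apply_zero f 0).symm

theorem jet_pow_eq_zero {f : ℂ[T;T⁻¹]} (hf : evalHom 0 f = 0) (n : ℕ) : jet n f ^ n = 0 := by
  rw [← map_pow, jet, RingHom.comp_apply, Ideal.Quotient.eq_zero_iff_mem,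
    Ideal.mem_span_singleton, AlgHom.coe_toRingHom, map_pow]
  exact pow_dvd_pow_of_dvd (X_dvd_iff.mpr (by rw [constantCoeff_taylor, hf])) n

theorem isUnit_rangeRestrict_jet {f : ℂ[T;T⁻¹]} (hf : evalHom 0 f ≠ 0) (n : ℕ) :
    IsUnit ((jet n).rangeRestrict f) := by
  set c := algebraMap ℂ ℂ[T;T⁻¹] (evalHom 0 f)
  have hc : IsUnit ((jet n).rangeRestrict c) := ((Ne.isUnit hf).map _).map _
  have hnil : IsNilpotent ((jet n).rangeRestrict (f - c)) :=
    ⟨n, Subtype.ext <| jet_pow_eq_zero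
      (by rw [map_sub, AlgHom.commutes, Algebra.algebraMap_self_apply, sub_self]) n⟩
  simpa using hnil.isUnit_add_left_of_commute hc (Commute.all _ _)

def coeffMatrix {α β : Type*} [Fintype α] [Fintype β] (P : Matrix α β ℂ[T;T⁻¹]) :
    ℤ →₀ Matrix α β ℂ :=
  Finsupp.onFinset (Finset.univ.biUnion fun p : α × β => (P p.1 p.2).coeff.support)
    (fun k => Matrix.of fun i j => (P i j).coeff k) fun k hk => by
      obtain ⟨i, j, hij⟩ : ∃ i j, (P i j).coeff k ≠ 0 := by
        by_contra! h
        exact hk (Matrix.ext h)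
      exact Finset.mem_biUnion.mpr ⟨(i, j), Finset.mem_univ _, Finsupp.mem_support_iff.mpr hij⟩

theorem trigSymM_apply {α β : Type*} (U : ℤ →₀ Matrix α β ℂ) (ξ : ℝ) (i : α) (j : β) :
    trigSymM U ξ i j = trigSym (U.mapRange (fun A => A i j) rfl) ξ := by
  refine Eq.trans ?_ (Finsupp.sum_mapRange_index (by simp)).symm
  simp [trigSymM, Finsupp.sum, Matrix.sum_apply, mul_comm]

theorem trigSymM_coeffMatrix {α β : Type*} [Fintype α] [Fintype β] (P : Matrix α β ℂ[T;T⁻¹])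
    (ξ : ℝ) :
    trigSymM (coeffMatrix P) ξ = P.map (evalHom ξ) := by
  ext i j
  rw [trigSymM_apply, Matrix.map_apply, ← trigSym_eq_evalHom]
  congr 1
  ext k
  rfl

end TrigPoly

end

open TrigPoly in
theorem row_normalization_general (r : ℕ) (hr : 2 ≤ r) (n : ℕ)
    (v : Fin r → ℤ →₀ ℂ) (hv : ∃ i, trigSym (v i) 0 ≠ 0) :
    ∃ U : ℤ →₀ Matrix (Fin r) (Fin r) ℂ,
      (∀ ξ : ℝ, (trigSymM U ξ).det = 1) ∧
      (∀ j : Fin r, derivsMatch n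
        (fun ξ => ∑ i, trigSym (v i) ξ * trigSymM U ξ i j)
        (fun _ => if (j : ℕ) = 0 then 1 else 0)) := by
  obtain ⟨m, rfl⟩ := Nat.exists_eq_add_of_le' hr
  obtain ⟨i, hi⟩ := hv
  -- Column operations need coefficients that lift to Laurent polynomials, so we work in the
  -- image of the jet map rather than in all of `ℂ⟦X⟧ ⧸ (X ^ n)`.
  set ε := (jet n).rangeRestrict
  set w : Fin (m + 2) → ℂ[T;T⁻¹] := fun k => AddMonoidAlgebra.ofCoeff (v k)
  have hwi : IsUnit (ε (w i)) := isUnit_rangeRestrict_jet (by rwa [← trigSym_eq_evalHom]) n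
  obtain ⟨U, hdet, hU⟩ :=
    SLReachable.single_one (t := ε ∘ w) (RingHom.rangeRestrict_surjective _) hwi 0
  refine ⟨coeffMatrix U, fun ξ => ?_, fun j => ?_⟩
  · rw [trigSymM_coeffMatrix, ← AlgHom.mapMatrix_apply, ← AlgHom.map_det, hdet, map_one]
  have hrow : (fun ξ => ∑ i, trigSym (v i) ξ * trigSymM (coeffMatrix U) ξ i j) =
      fun ξ => evalHom ξ ((w ᵥ* U) j) := by
    ext ξ
    simp [trigSymM_coeffMatrix, vecMul, dotProduct, w,
      trigSym_eq_evalHom (AddMonoidAlgebra.ofCoeff _)]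
  have hconst : (fun _ : ℝ => if (j : ℕ) = 0 then (1 : ℂ) else 0) =
      fun ξ => evalHom ξ ((Pi.single 0 1 : Fin (m + 2) → ℂ[T;T⁻¹]) j) := by
    ext ξ
    rcases eq_or_ne j 0 with rfl | hj <;> simp [*]
  rw [hrow, hconst]
  refine derivsMatch_of_jet_eq (Subtype.ext_iff.mp (?_ : ε _ = ε _))
  rw [RingHom.map_vecMul, hU]
  rcases eq_or_ne j 0 with rfl | hj <;> simp [*]

/-- Given `r ≥ 2`, `n ≥ 1` and a `1 × r` row vector `v̂` of trigonometric polynomials with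
`v̂(0) ≠ 0`, there is an `r × r` matrix `Û` of trigonometric polynomials with `det Û(ξ) = 1`
(hence strongly invertible) such that `v̂(ξ)Û(ξ) = [1,0,…,0] + O(|ξ|^n)` as `ξ → 0`. -/
theorem row_normalization (r : ℕ) (hr : 2 ≤ r) (n : ℕ) (hn : 1 ≤ n)
    (v : Fin r → ℤ →₀ ℂ) (hv : ∃ i, trigSym (v i) 0 ≠ 0) :
    ∃ U : ℤ →₀ Matrix (Fin r) (Fin r) ℂ,
      (∀ ξ : ℝ, (trigSymM U ξ).det = 1) ∧
      (∀ j : Fin r, derivsMatch n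
        (fun ξ => ∑ i, trigSym (v i) ξ * trigSymM U ξ i j)
        (fun _ => if (j : ℕ) = 0 then 1 else 0)) :=
  row_normalization_general r hr n v hv
end

section
/- Let $\Theta\in (l_0(\mathbb{Z}))^{r\times r}$ be a finitely supported matrix-valued filter and define the convolution operator $C_\Theta(v):=v*\Theta$ for $v\in (l_\infty(\mathbb{Z}))^{1\times r}$, where $(v*\Theta)(n)=\sum_{k\in\mathbb{Z}} v(k)\Theta(n-k)$. Then $C_\Theta:(l_\infty(\mathbb{Z}))^{1\times r}\to (l_\infty(\mathbb{Z}))^{1\times r}$ is injective if and only if $\det(\widehat{\Theta}(\xi))\neq 0$ for all $\xi\in\mathbb{R}$, where $\widehat{\Theta}(\xi)=\sum_{k\in\mathbb{Z}}\Theta(k)e^{-ik\xi}$. -/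
/-- Convolution of a row-vector sequence `v : ℤ → ℂ^{1×r}` with a finitely supported
matrix filter `Θ`: `(v*Θ)(n) = ∑ₖ v(k)Θ(n-k)`. -/
noncomputable def convRow {r : ℕ} (v : ℤ → Fin r → ℂ)
    (Θ : ℤ →₀ Matrix (Fin r) (Fin r) ℂ) (n : ℤ) : Fin r → ℂ :=
  fun j => ∑ l ∈ Θ.support, ∑ i, v (n - l) i * Θ l i j

/-- A vector sequence is bounded (belongs to `(l_∞(ℤ))^{1×r}`). -/
def IsBddSeq {r : ℕ} (v : ℤ → Fin r → ℂ) : Prop :=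
  ∃ M : ℝ, ∀ (k : ℤ) (i : Fin r), ‖v k i‖ ≤ M

/-!
Write `L` for the matrix `∑ₖ Θ(k) Tᵏ` over the Laurent polynomial ring `ℂ[T;T⁻¹]`, acting on
sequences by convolution with `T` the unit shift; `det Θ̂(ξ)` is `det L` evaluated at `e^{-iξ}`.

If `det Θ̂(ξ) = 0`, a nonzero row `c` with `c Θ̂(ξ) = 0` gives the bounded nonzero solution
`v(k) = e^{ikξ} c` of `v * Θ = 0`. Conversely, multiplying by the adjugate of `L` turns
`v * Θ = w * Θ` into the scalar equations `det L (vⱼ - wⱼ) = 0`. Up to the unit `Tᵐ` and a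
constant, `det L` factors over `ℂ` into `T - a` with `|a| ≠ 1`, since it has no zero on the unit
circle; and `u(n - 1) = a u(n)` has no nonzero bounded solution when `|a| ≠ 1`, because `u`
grows geometrically in one of the two directions.
-/

open LaurentPolynomial Filter Topology ENNReal
open scoped Polynomial

section ConvOp

variable (R : Type*) [CommSemiring R]

def translationHom : Multiplicative ℤ →* Module.End R (ℤ → R) where
  toFun k := LinearMap.funLeft R R (· - k.toAdd)
  map_one' := by ext; simp
  map_mul' k l := by ext; simp [sub_sub]

-- `d` acts by `u ↦ (n ↦ ∑ₗ dₗ u (n - l))`.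
noncomputable def convOp : R[T;T⁻¹] →ₐ[R] Module.End R (ℤ → R) :=
  AddMonoidAlgebra.lift R (Module.End R (ℤ → R)) ℤ (translationHom R)

variable {R}

lemma convOp_T (k : ℤ) (u : ℤ → R) : convOp R (T k) u = fun n => u (n - k) := by
  rw [T, convOp, AddMonoidAlgebra.lift_single, one_smul]; rfl

lemma convOp_C (c : R) (u : ℤ → R) : convOp R (C c) u = c • u := by
  rw [C_eq_algebraMap, AlgHom.commutes]; rfl

lemma convOp_mul_apply (d e : R[T;T⁻¹]) (u : ℤ → R) :
    convOp R (d * e) u = convOp R e (convOp R d u) := by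
  rw [mul_comm, map_mul, Module.End.mul_apply]

end ConvOp

lemma Memℓp.infty_comp {ι ι' E : Type*} [NormedAddCommGroup E] {f : ι → E} (hf : Memℓp f ∞)
    (e : ι' → ι) : Memℓp (f ∘ e) ∞ :=
  memℓp_infty ((memℓp_infty_iff.1 hf).mono (Set.range_comp_subset_range e (‖f ·‖)))

section Bounded

variable {𝕜 : Type*} [NormedField 𝕜]

lemma memℓp_convOp (d : 𝕜[T;T⁻¹]) {u : ℤ → 𝕜} (hu : Memℓp u ∞) :
    Memℓp (convOp 𝕜 d u) ∞ := by
  induction d using LaurentPolynomial.induction_on' with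
  | add p q hp hq => rw [map_add, LinearMap.add_apply]; exact hp.add hq
  | C_mul_T k c =>
    rw [convOp_mul_apply, convOp_C, convOp_T]
    exact (hu.const_smul c).infty_comp (· - k)

lemma injOn_convOp_mul {d e : 𝕜[T;T⁻¹]} (hd : Set.InjOn (convOp 𝕜 d) {u | Memℓp u ∞})
    (he : Set.InjOn (convOp 𝕜 e) {u | Memℓp u ∞}) :
    Set.InjOn (convOp 𝕜 (d * e)) {u | Memℓp u ∞} := by
  rw [map_mul, Module.End.coe_mul]
  exact hd.comp he fun u hu => memℓp_convOp e hu

lemma injOn_convOp_C {c : 𝕜} (hc : c ≠ 0) : Set.InjOn (convOp 𝕜 (C c)) {u | Memℓp u ∞} :=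
  fun u _ w _ h => smul_right_injective _ hc (by simpa only [convOp_C] using h)

lemma eq_zero_of_sub_one_eq_mul {u : ℤ → 𝕜} (hu : Memℓp u ∞) {a : 𝕜} (ha : ‖a‖ ≠ 1)
    (h : ∀ n, u (n - 1) = a * u n) : u = 0 := by
  obtain ⟨M, hM⟩ := memℓp_infty_iff.1 hu
  have hbdd : ∀ n, ‖u n‖ ≤ M := fun n => hM ⟨n, rfl⟩
  have iter : ∀ n (k : ℕ), u (n - k) = a ^ k * u n := by
    intro n k
    induction k with
    | zero => simp
    | succ k ih => rw [Nat.cast_succ, ← sub_sub, h, ih, pow_succ', mul_assoc]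
  funext n
  rcases ha.lt_or_gt with hlt | hgt
  · have hle : ∀ k : ℕ, ‖u n‖ ≤ ‖a‖ ^ k * M := fun k => by
      have hk := iter (n + k) k
      rw [add_sub_cancel_right] at hk
      rw [hk, norm_mul, norm_pow]
      gcongr
      exact hbdd _
    have hlim : Tendsto (fun k : ℕ => ‖a‖ ^ k * M) atTop (𝓝 0) := by
      simpa using (tendsto_pow_atTop_nhds_zero_of_lt_one (norm_nonneg a) hlt).mul_const M
    exact norm_le_zero_iff.1 (ge_of_tendsto' hlim hle)
  · by_contra hne
    have hpos : 0 < ‖u n‖ := norm_pos_iff.2 hne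
    obtain ⟨k, hk⟩ := pow_unbounded_of_one_lt (M / ‖u n‖) hgt
    have := hbdd (n - k)
    rw [iter, norm_mul, norm_pow, ← le_div_iff₀ hpos] at this
    exact hk.not_ge this

lemma injOn_convOp_T_sub_C {a : 𝕜} (ha : ‖a‖ ≠ 1) :
    Set.InjOn (convOp 𝕜 (T 1 - C a)) {u | Memℓp u ∞} := by
  intro u hu w hw huw
  rw [← sub_eq_zero]
  refine eq_zero_of_sub_one_eq_mul (Memℓp.sub hu hw) ha fun n => ?_
  have := congrFun huw n
  simp only [map_sub, LinearMap.sub_apply, convOp_T, convOp_C, Pi.sub_apply, Pi.smul_apply,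
    smul_eq_mul] at this
  simp only [Pi.sub_apply]
  linear_combination this

lemma injOn_convOp_prod_T_sub_C {s : Multiset 𝕜} (hs : ∀ a ∈ s, ‖a‖ ≠ 1) :
    Set.InjOn (convOp 𝕜 (s.map fun a => T 1 - C a).prod) {u | Memℓp u ∞} := by
  refine Multiset.prod_induction (fun d => Set.InjOn (convOp 𝕜 d) {u | Memℓp u ∞}) _
    (fun _ _ => injOn_convOp_mul) ?_ ?_
  · rw [map_one]
    exact Set.injOn_id _
  · simp only [Multiset.mem_map]
    rintro _ ⟨a, ha, rfl⟩
    exact injOn_convOp_T_sub_C (hs a ha)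

lemma toLaurent_eq_C_mul_prod_T_sub_C [IsAlgClosed 𝕜] (p : 𝕜[X]) :
    p.toLaurent = C p.leadingCoeff * (p.roots.map fun a => T 1 - C a).prod := by
  conv_lhs => rw [← Polynomial.C_leadingCoeff_mul_prod_multiset_X_sub_C
    (IsAlgClosed.card_roots_eq_natDegree (p := p))]
  simp [map_multiset_prod, Multiset.map_map]

lemma injOn_convOp_toLaurent [IsAlgClosed 𝕜] {p : 𝕜[X]} (hp : p ≠ 0)
    (hroots : ∀ a ∈ p.roots, ‖a‖ ≠ 1) :
    Set.InjOn (convOp 𝕜 p.toLaurent) {u | Memℓp u ∞} := by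
  rw [toLaurent_eq_C_mul_prod_T_sub_C]
  exact injOn_convOp_mul (injOn_convOp_C (Polynomial.leadingCoeff_ne_zero.2 hp))
    (injOn_convOp_prod_T_sub_C hroots)

end Bounded

lemma injOn_convOp_of_eval₂_ne_zero {d : ℂ[T;T⁻¹]}
    (hd : ∀ z : Circle, eval₂ (RingHom.id ℂ) (Circle.toUnits z) d ≠ 0) :
    Set.InjOn (convOp ℂ d) {u | Memℓp u ∞} := by
  obtain ⟨m, p, hp⟩ := exists_T_pow d
  have hp_eval : ∀ z : Circle, p.eval (z : ℂ) ≠ 0 := fun z => by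
    have := congrArg (eval₂ (RingHom.id ℂ) (Circle.toUnits z)) hp
    rw [eval₂_toLaurent, map_mul, eval₂_T, Circle.toUnits_apply, Units.val_mk0] at this
    rw [Polynomial.eval, this]
    exact mul_ne_zero (hd z) (Units.ne_zero _)
  have hp0 : p ≠ 0 := fun h => hp_eval 1 (by simp [h])
  refine Set.InjOn.of_comp (g := convOp ℂ (T m)) ?_
  rw [← Module.End.coe_mul, ← map_mul, mul_comm, ← hp]
  refine injOn_convOp_toLaurent hp0 fun a ha h1 => hp_eval ⟨a, mem_sphere_zero_iff_norm.2 h1⟩ ?_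
  exact (Polynomial.mem_roots hp0).1 ha

section RowConv

variable {R : Type*} [CommSemiring R] {ι κ μ : Type*} [Fintype ι] [Fintype κ]

noncomputable def rowConv (M : Matrix ι κ R[T;T⁻¹]) (v : ι → ℤ → R) : κ → ℤ → R :=
  fun j => ∑ i, convOp R (M i j) (v i)

lemma rowConv_mul (M : Matrix ι κ R[T;T⁻¹]) (N : Matrix κ μ R[T;T⁻¹]) (v : ι → ℤ → R) :
    rowConv (M * N) v = rowConv N (rowConv M v) := by
  funext l
  simp only [rowConv, Matrix.mul_apply, map_sum, LinearMap.sum_apply, convOp_mul_apply]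
  exact Finset.sum_comm

lemma rowConv_smul_one [DecidableEq ι] (d : R[T;T⁻¹]) (v : ι → ℤ → R) :
    rowConv (d • (1 : Matrix ι ι R[T;T⁻¹])) v = fun j => convOp R d (v j) := by
  funext j
  simp [rowConv, Matrix.one_apply, apply_ite, ite_apply]

end RowConv

lemma convOp_det_eq_of_rowConv_eq {R ι : Type*} [CommRing R] [Fintype ι] [DecidableEq ι]
    {M : Matrix ι ι R[T;T⁻¹]} {v w : ι → ℤ → R} (h : rowConv M v = rowConv M w) (j : ι) :
    convOp R M.det (v j) = convOp R M.det (w j) := by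
  have := congrArg (rowConv M.adjugate) h
  rw [← rowConv_mul, ← rowConv_mul, Matrix.mul_adjugate, rowConv_smul_one, rowConv_smul_one]
    at this
  exact congrFun this j

section LaurentSymbol

variable {R α β : Type*} [CommSemiring R]

noncomputable def laurentSymbol (Θ : ℤ →₀ Matrix α β R) : Matrix α β R[T;T⁻¹] :=
  Θ.sum fun k A => (T k : R[T;T⁻¹]) • A.map C

lemma laurentSymbol_apply (Θ : ℤ →₀ Matrix α β R) (i : α) (j : β) :
    laurentSymbol Θ i j = ∑ k ∈ Θ.support, T k * C (Θ k i j) := by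
  simp [laurentSymbol, Finsupp.sum, Matrix.sum_apply]

end LaurentSymbol

section Symbols

variable {r : ℕ}

lemma swap_convRow (v : ℤ → Fin r → ℂ) (Θ : ℤ →₀ Matrix (Fin r) (Fin r) ℂ) :
    Function.swap (convRow v Θ) = rowConv (laurentSymbol Θ) (Function.swap v) := by
  funext j n
  simp only [Function.swap, convRow, rowConv, laurentSymbol_apply, map_sum, LinearMap.sum_apply,
    convOp_mul_apply, convOp_T, convOp_C, Finset.sum_apply, Pi.smul_apply, smul_eq_mul]
  rw [Finset.sum_comm]
  simp only [mul_comm]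

lemma trigSymM_apply (Θ : ℤ →₀ Matrix (Fin r) (Fin r) ℂ) (ξ : ℝ) (i j : Fin r) :
    trigSymM Θ ξ i j = ∑ k ∈ Θ.support, Complex.exp (-Complex.I * k * ξ) * Θ k i j := by
  simp [trigSymM, Finsupp.sum, Matrix.sum_apply]

lemma trigSymM_eq_map_laurentSymbol (Θ : ℤ →₀ Matrix (Fin r) (Fin r) ℂ) (ξ : ℝ) :
    trigSymM Θ ξ =
      (laurentSymbol Θ).map (eval₂ (RingHom.id ℂ) (Circle.toUnits (Circle.exp (-ξ)))) := by
  ext i j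
  rw [Matrix.map_apply, laurentSymbol_apply, map_sum, trigSymM_apply]
  refine Finset.sum_congr rfl fun k _ => ?_
  rw [map_mul, eval₂_T, eval₂_C, Units.val_zpow_eq_zpow_val, Circle.toUnits_apply, Units.val_mk0,
    Circle.coe_exp, ← Complex.exp_int_mul, RingHom.id_apply]
  congr 2
  push_cast
  ring

lemma convRow_exp_smul (Θ : ℤ →₀ Matrix (Fin r) (Fin r) ℂ) (ξ : ℝ) (c : Fin r → ℂ) :
    convRow (fun k => Complex.exp (Complex.I * k * ξ) • c) Θ =
      fun n : ℤ => Complex.exp (Complex.I * n * ξ) • Matrix.vecMul c (trigSymM Θ ξ) := by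
  funext n j
  simp only [convRow, Pi.smul_apply, smul_eq_mul, Matrix.vecMul, dotProduct, trigSymM_apply,
    Finset.mul_sum]
  rw [Finset.sum_comm]
  refine Finset.sum_congr rfl fun i _ => Finset.sum_congr rfl fun l _ => ?_
  have : Complex.I * ↑(n - l) * ξ = Complex.I * n * ξ + -Complex.I * l * ξ := by push_cast; ring
  rw [this, Complex.exp_add]
  ring

lemma isBddSeq_exp_smul (ξ : ℝ) (c : Fin r → ℂ) :
    IsBddSeq fun k : ℤ => Complex.exp (Complex.I * k * ξ) • c :=
  ⟨‖c‖, fun k i => by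
    show ‖Complex.exp _ * c i‖ ≤ _
    rw [norm_mul, Complex.norm_exp]
    simpa using norm_le_pi_norm c i⟩

lemma IsBddSeq.memℓp_swap {v : ℤ → Fin r → ℂ} (hv : IsBddSeq v) (i : Fin r) :
    Memℓp (Function.swap v i) ∞ :=
  let ⟨M, hM⟩ := hv
  memℓp_infty ⟨M, by rintro _ ⟨k, rfl⟩; exact hM k i⟩

end Symbols

/-- Lemma 3.2(1): the convolution operator `C_Θ : (l_∞(ℤ))^{1×r} → (l_∞(ℤ))^{1×r}` is
injective if and only if `det Θ̂(ξ) ≠ 0` for all `ξ ∈ ℝ`. -/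
theorem conv_injective_iff_det_ne_zero {r : ℕ}
    (Θ : ℤ →₀ Matrix (Fin r) (Fin r) ℂ) :
    (∀ v w : ℤ → Fin r → ℂ, IsBddSeq v → IsBddSeq w →
        convRow v Θ = convRow w Θ → v = w) ↔
    (∀ ξ : ℝ, (trigSymM Θ ξ).det ≠ 0) := by
  constructor
  · intro hinj ξ hdet
    obtain ⟨c, hc, hcΘ⟩ := Matrix.exists_vecMul_eq_zero_iff.2 hdet
    have hconv : convRow (fun k => Complex.exp (Complex.I * k * ξ) • c) Θ = convRow 0 Θ := by
      rw [convRow_exp_smul, hcΘ]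
      funext n j
      simp [convRow]
    have := hinj _ 0 (isBddSeq_exp_smul ξ c) ⟨0, by simp⟩ hconv
    exact hc (by simpa using congrFun this 0)
  · intro hdet v w hv hw hvw
    have hinj : Set.InjOn (convOp ℂ (laurentSymbol Θ).det) {u | Memℓp u ∞} := by
      refine injOn_convOp_of_eval₂_ne_zero fun z => ?_
      obtain ⟨ξ, rfl⟩ := Circle.exp_surjective z
      simpa [trigSymM_eq_map_laurentSymbol, RingHom.map_det] using hdet (-ξ)
    have hrow := congrArg Function.swap hvw
    rw [swap_convRow, swap_convRow] at hrow
    funext n j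
    exact congrFun (hinj (hv.memℓp_swap j) (hw.memℓp_swap j)
      (convOp_det_eq_of_rowConv_eq hrow j)) n
end

section
/- Let $r\geq 2$ and $m\in\mathbb{N}$. Define $\nabla^m\delta\in l_0(\mathbb{Z})$ by $\widehat{\nabla^m\delta}(\xi)=(1-e^{-i\xi})^m$, and let $E_{\nabla^m\delta;r}(\xi)$ be the $r\times r$ matrix whose $(l,k)$-entry is $\widehat{(\nabla^m\delta)^{[k-l;r]}}(\xi)$, where $v^{[\gamma;r]}(j):=v(\gamma+rj)$. Then $\det(E_{\nabla^m\delta;r}(\xi))=(1-e^{-i\xi})^m$ for all $\xi\in\mathbb{R}$. In particular, $E_{\nabla^m\delta;r}(\xi)$ is invertible for all $\xi\in\mathbb{R}\setminus 2\pi\mathbb{Z}$. -/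
/-!
The coset matrix `E_{u;r}(ξ)` is linear in `u` and sends the unit impulse at `a` to `S ^ a`,
where `S = E_{δ₁;r}(ξ)` is the cyclic shift of `Fin r` with the twist `e^{-iξ}` in its corner
`(r - 1, 0)`; multiplicativity `E_{δ_{a+b}} = E_{δ_a} E_{δ_b}` holds because the product sums the
kernel over one full set of residues mod `r`. As `∇^m δ = (δ₀ - δ₁)^m`, this gives
`E_{∇^m δ;r}(ξ) = (1 - S)^m`. Expanding `det (1 - S)` along the first column, whose only nonzero
entries are `1` on top and `-e^{-iξ}` at the bottom, leaves two triangular minors of determinant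
`1` and `(-1)^(r-1)`, so `det (1 - S) = 1 - e^{-iξ}`.
-/

/-- The scalar coset symbol `û^{[γ;d]}(ξ) = ∑ₖ u(γ + dk) e^{-ikξ}`. -/
noncomputable def cosetSym (u : ℤ →₀ ℂ) (γ d : ℤ) (ξ : ℝ) : ℂ :=
  ∑ j ∈ u.support, if d ∣ (j - γ) then
    u j * Complex.exp (-Complex.I * (((j - γ) / d : ℤ) : ℂ) * (ξ : ℂ)) else 0

/-- The filter `∇^m δ`, with symbol `(1 - e^{-iξ})^m`; its coefficients are
`(-1)^k (m choose k)` at `k = 0, …, m`. -/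
noncomputable def nablaDelta (m : ℕ) : ℤ →₀ ℂ :=
  ∑ k ∈ Finset.range (m + 1), Finsupp.single (k : ℤ) ((-1 : ℂ) ^ k * (m.choose k))

open Finset

theorem Int.eq_zero_or_eq_of_dvd_of_neg_lt_of_le {r x : ℤ} (h : r ∣ x) (h₁ : -r < x)
    (h₂ : x ≤ r) : x = 0 ∨ x = r := by
  obtain ⟨q, rfl⟩ := h
  obtain ⟨hq₁, hq₂⟩ : -1 < q ∧ q ≤ 1 := ⟨by nlinarith, by nlinarith⟩
  interval_cases q <;> simp

theorem Fin.eq_of_dvd_sub {r : ℕ} {s t : Fin r} (h : (r : ℤ) ∣ (s : ℕ) - (t : ℕ)) : s = t := by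
  have := Int.eq_zero_or_eq_of_dvd_of_neg_lt_of_le h (by omega) (by omega)
  omega

noncomputable def cosetKernel (d : ℤ) (ξ : ℝ) (x : ℤ) : ℂ :=
  if d ∣ x then Complex.exp (-Complex.I * ((x / d : ℤ) : ℂ) * ξ) else 0

section cosetKernel

variable {d : ℤ} (ξ : ℝ)

@[simp]
theorem cosetKernel_zero : cosetKernel d ξ 0 = 1 := by
  simp [cosetKernel]

theorem cosetKernel_self (hd : d ≠ 0) : cosetKernel d ξ d = Complex.exp (-Complex.I * ξ) := by
  simp [cosetKernel, Int.ediv_self hd]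

theorem cosetKernel_of_not_dvd {x : ℤ} (h : ¬ d ∣ x) : cosetKernel d ξ x = 0 := by
  simp [cosetKernel, h]

theorem cosetKernel_add_of_dvd (hd : d ≠ 0) {x : ℤ} (hx : d ∣ x) (y : ℤ) :
    cosetKernel d ξ (x + y) = cosetKernel d ξ x * cosetKernel d ξ y := by
  by_cases hy : d ∣ y
  · obtain ⟨a, rfl⟩ := hx
    obtain ⟨b, rfl⟩ := hy
    simp only [cosetKernel, ← mul_add, dvd_mul_right, if_true, Int.mul_ediv_cancel_left _ hd,
      ← Complex.exp_add]
    push_cast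
    ring_nf
  · rw [cosetKernel_of_not_dvd ξ hy, cosetKernel_of_not_dvd ξ ((dvd_add_right hx).not.mpr hy),
      mul_zero]

end cosetKernel

theorem cosetSym_eq_sum (u : ℤ →₀ ℂ) (γ d : ℤ) (ξ : ℝ) :
    cosetSym u γ d ξ = u.sum fun j a => a * cosetKernel d ξ (j - γ) := by
  simp only [cosetSym, Finsupp.sum, cosetKernel, mul_ite, mul_zero]

theorem sum_cosetKernel_sub_mul_cosetKernel_add {r : ℕ} (hr : 0 < r) (ξ : ℝ) (x y : ℤ) :
    ∑ s : Fin r, cosetKernel r ξ (x - (s : ℕ)) * cosetKernel r ξ (y + (s : ℕ)) =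
      cosetKernel r ξ (x + y) := by
  have hr' : (r : ℤ) ≠ 0 := by omega
  have h₀ := Int.emod_nonneg x hr'
  have h₁ := Int.emod_lt_of_pos x (by omega : (0 : ℤ) < r)
  let s₀ : Fin r := ⟨(x % r).toNat, by omega⟩
  have hs₀ : (r : ℤ) ∣ x - (s₀ : ℕ) := by
    rw [show ((s₀ : ℕ) : ℤ) = x % r by simp [s₀, h₀]]
    exact Int.dvd_self_sub_of_emod_eq rfl
  rw [sum_eq_single s₀, ← cosetKernel_add_of_dvd ξ hr' hs₀, sub_add_add_cancel]
  · intro s _ hs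
    refine mul_eq_zero_of_left (cosetKernel_of_not_dvd ξ fun h => hs (Fin.eq_of_dvd_sub ?_)) _
    simpa using dvd_sub hs₀ h
  · simp

/-- The coset matrix `E_{δ_a;r}(ξ)` of the unit impulse at `a`. -/
noncomputable def shiftMatrix (r : ℕ) (ξ : ℝ) (a : ℤ) : Matrix (Fin r) (Fin r) ℂ :=
  Matrix.of fun l k => cosetKernel r ξ (a - ((k : ℕ) - (l : ℕ)))

section shiftMatrix

variable {r : ℕ} (ξ : ℝ)

@[simp]
theorem shiftMatrix_zero : shiftMatrix r ξ 0 = 1 := by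
  ext l k
  by_cases h : l = k
  · subst h
    simp [shiftMatrix]
  · rw [shiftMatrix, Matrix.of_apply, Matrix.one_apply_ne h,
      cosetKernel_of_not_dvd ξ fun hd => h (Fin.eq_of_dvd_sub ?_)]
    simpa using hd

theorem shiftMatrix_add (a b : ℤ) :
    shiftMatrix r ξ (a + b) = shiftMatrix r ξ a * shiftMatrix r ξ b := by
  ext l k
  rw [Matrix.mul_apply, shiftMatrix, Matrix.of_apply,
    show a + b - ((k : ℕ) - (l : ℕ)) = a + (l : ℕ) + (b - (k : ℕ)) by ring,
    ← sum_cosetKernel_sub_mul_cosetKernel_add l.pos ξ (a + l) (b - k)]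
  refine sum_congr rfl fun s _ => ?_
  simp only [shiftMatrix, Matrix.of_apply]
  ring_nf

theorem shiftMatrix_natCast (n : ℕ) : shiftMatrix r ξ n = shiftMatrix r ξ 1 ^ n := by
  induction n with
  | zero => simp
  | succ n ih => rw [Nat.cast_succ, shiftMatrix_add, ih, pow_succ]

theorem shiftMatrix_one_apply (l k : Fin r) :
    shiftMatrix r ξ 1 l k =
      if (k : ℕ) = l + 1 then 1
      else if (l : ℕ) + 1 = r ∧ (k : ℕ) = 0 then Complex.exp (-Complex.I * ξ) else 0 := by
  have hr : (r : ℤ) ≠ 0 := by have := l.pos; omega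
  simp only [shiftMatrix, Matrix.of_apply]
  split_ifs with h₁ h₂
  · rw [show (1 : ℤ) - ((k : ℕ) - (l : ℕ)) = 0 by omega, cosetKernel_zero]
  · rw [show (1 : ℤ) - ((k : ℕ) - (l : ℕ)) = r by omega, cosetKernel_self ξ hr]
  · refine cosetKernel_of_not_dvd ξ fun hd => ?_
    have := Int.eq_zero_or_eq_of_dvd_of_neg_lt_of_le hd (by omega) (by omega)
    omega

end shiftMatrix

noncomputable def cosetMatrix (r : ℕ) (u : ℤ →₀ ℂ) (ξ : ℝ) : Matrix (Fin r) (Fin r) ℂ :=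
  Matrix.of fun l k => cosetSym u (((k : ℕ) : ℤ) - ((l : ℕ) : ℤ)) (r : ℤ) ξ

theorem cosetMatrix_eq_linearCombination (r : ℕ) (u : ℤ →₀ ℂ) (ξ : ℝ) :
    cosetMatrix r u ξ = Finsupp.linearCombination ℂ (shiftMatrix r ξ) u := by
  ext l k
  simp [cosetMatrix, cosetSym_eq_sum, Finsupp.linearCombination_apply, Finsupp.sum,
    Matrix.sum_apply, shiftMatrix]

theorem one_sub_pow_eq_sum {R A : Type*} [CommRing R] [Ring A] [Algebra R A] (x : A) (m : ℕ) :
    (1 - x) ^ m = ∑ k ∈ range (m + 1), ((-1) ^ k * m.choose k : R) • x ^ k := by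
  rw [sub_eq_neg_add, (Commute.one_right (-x)).add_pow]
  refine sum_congr rfl fun k _ => ?_
  rw [one_pow, mul_one, neg_pow, mul_smul, Nat.cast_smul_eq_nsmul, nsmul_eq_mul', Algebra.smul_def]
  simp [mul_assoc]

theorem cosetMatrix_nablaDelta (r m : ℕ) (ξ : ℝ) :
    cosetMatrix r (nablaDelta m) ξ = (1 - shiftMatrix r ξ 1) ^ m := by
  simp only [cosetMatrix_eq_linearCombination, nablaDelta, map_sum,
    Finsupp.linearCombination_single, shiftMatrix_natCast, one_sub_pow_eq_sum (R := ℂ)]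

theorem det_one_sub_shiftMatrix_one {r : ℕ} (hr : 2 ≤ r) (ξ : ℝ) :
    (1 - shiftMatrix r ξ 1).det = 1 - Complex.exp (-Complex.I * ξ) := by
  obtain ⟨n, rfl⟩ : ∃ n, r = n + 2 := ⟨r - 2, by omega⟩
  have h_top : ((1 - shiftMatrix (n + 2) ξ 1).submatrix Fin.succ Fin.succ).det = 1 := by
    rw [Matrix.det_of_isUpperTriangular]
    · simp [shiftMatrix_one_apply]
    · intro a b hba
      rw [Fin.lt_def] at hba
      simp only [Matrix.submatrix_apply, Matrix.sub_apply, Matrix.one_apply,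
        shiftMatrix_one_apply, Fin.val_succ]
      split_ifs <;> simp_all [Fin.ext_iff] <;> omega
  have h_bottom :
      ((1 - shiftMatrix (n + 2) ξ 1).submatrix Fin.castSucc Fin.succ).det = (-1) ^ (n + 1) := by
    rw [Matrix.det_of_isLowerTriangular]
    · simp [shiftMatrix_one_apply, Fin.ext_iff]
    · intro a b hab
      rw [OrderDual.toDual_lt_toDual, Fin.lt_def] at hab
      simp only [Matrix.submatrix_apply, Matrix.sub_apply, Matrix.one_apply,
        shiftMatrix_one_apply, Fin.val_succ, Fin.val_castSucc]
      split_ifs <;> simp_all [Fin.ext_iff] <;> omega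
  rw [Matrix.det_succ_column_zero, Fin.sum_univ_succ, Fin.sum_univ_castSucc, sum_eq_zero]
  · simp [shiftMatrix_one_apply, h_top, h_bottom]
    rw [← sub_eq_add_neg, mul_right_comm, ← pow_add, Even.neg_one_pow ⟨n + 1, rfl⟩, one_mul]
  · intro i _
    simp [shiftMatrix_one_apply, Fin.ext_iff, i.isLt.ne]

theorem one_sub_exp_neg_I_mul_ne_zero {ξ : ℝ} (hξ : ¬ ∃ k : ℤ, ξ = 2 * Real.pi * k) :
    1 - Complex.exp (-Complex.I * ξ) ≠ 0 := by
  rw [sub_ne_zero, ne_comm, Ne, Complex.exp_eq_one_iff]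
  rintro ⟨n, hn⟩
  refine hξ ⟨-n, ?_⟩
  have h : (ξ : ℂ) = (2 * Real.pi * ((-n : ℤ) : ℝ) : ℝ) := by
    push_cast
    linear_combination Complex.I * hn + (ξ + 2 * Real.pi * n) * Complex.I_sq
  exact_mod_cast h

theorem det_coset_matrix_nabla_general (r : ℕ) (hr : 2 ≤ r) (m : ℕ) :
    (∀ ξ : ℝ, (Matrix.of fun l k : Fin r =>
        cosetSym (nablaDelta m) (((k : ℕ) : ℤ) - ((l : ℕ) : ℤ)) (r : ℤ) ξ).det
      = (1 - Complex.exp (-Complex.I * (ξ : ℂ))) ^ m) ∧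
    (∀ ξ : ℝ, (¬ ∃ k : ℤ, ξ = 2 * Real.pi * k) →
      IsUnit (Matrix.of fun l k : Fin r =>
        cosetSym (nablaDelta m) (((k : ℕ) : ℤ) - ((l : ℕ) : ℤ)) (r : ℤ) ξ)) := by
  have hdet (ξ : ℝ) :
      (cosetMatrix r (nablaDelta m) ξ).det = (1 - Complex.exp (-Complex.I * ξ)) ^ m := by
    rw [cosetMatrix_nablaDelta, Matrix.det_pow, det_one_sub_shiftMatrix_one hr]
  refine ⟨hdet, fun ξ hξ => ?_⟩
  rw [Matrix.isUnit_iff_isUnit_det, ← cosetMatrix, hdet ξ]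
  exact (pow_ne_zero m (one_sub_exp_neg_I_mul_ne_zero hξ)).isUnit

/-- The determinant of the `r × r` coset matrix `E_{∇^m δ; r}(ξ)` (with `(l,k)`-entry the
symbol of the `(k-l)`-coset of `∇^m δ`) equals `(1 - e^{-iξ})^m`; in particular the matrix
is invertible for all `ξ ∉ 2πℤ`. -/
theorem det_coset_matrix_nabla (r : ℕ) (hr : 2 ≤ r) (m : ℕ) (hm : 1 ≤ m) :
    (∀ ξ : ℝ, (Matrix.of fun l k : Fin r =>
        cosetSym (nablaDelta m) (((k : ℕ) : ℤ) - ((l : ℕ) : ℤ)) (r : ℤ) ξ).det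
      = (1 - Complex.exp (-Complex.I * (ξ : ℂ))) ^ m) ∧
    (∀ ξ : ℝ, (¬ ∃ k : ℤ, ξ = 2 * Real.pi * k) →
      IsUnit (Matrix.of fun l k : Fin r =>
        cosetSym (nablaDelta m) (((k : ℕ) : ℤ) - ((l : ℕ) : ℤ)) (r : ℤ) ξ)) :=
  det_coset_matrix_nabla_general r hr m
end

section
/- Let $\mathsf{d}\geq 2$, and let $\mathring{a}\in(l_0(\mathbb{Z}))^{r\times r}$, $\mathring{b}\in(l_0(\mathbb{Z}))^{s\times r}$, $\epsilon_1,\ldots,\epsilon_s\in\{\pm 1\}$ satisfy the quasi-tight filter bank equations $\overline{\widehat{\mathring{a}}(\xi)}^{\mathsf{T}}\widehat{\mathring{a}}(\xi)+\overline{\widehat{\mathring{b}}(\xi)}^{\mathsf{T}}\mathrm{Diag}(\epsilon_1,\ldots,\epsilon_s)\widehat{\mathring{b}}(\xi)=I_r$ for all $\xi$. Suppose $\mathring{\phi}$ is an $r\times 1$ vector of compactly supported $L_2$ functions with $\widehat{\mathring{\phi}}(\mathsf{d}\xi)=\widehat{\mathring{a}}(\xi)\widehat{\mathring{\phi}}(\xi)$,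 and define $\widehat{\psi}(\mathsf{d}\xi)=\widehat{\mathring{b}}(\xi)\widehat{\mathring{\phi}}(\xi)$. If $\widehat{\psi}(\xi)=O(|\xi|^m)$ as $\xi\to 0$, then $\|\widehat{\mathring{\phi}}(\xi)\|^2=\|\widehat{\mathring{\phi}}(0)\|^2+O(|\xi|^{2m})$ as $\xi\to 0$. -/
open Complex Finset Matrix
open scoped ContDiff

private lemma itD_conj (f : ℝ → ℂ) (n : ℕ) (x : ℝ) :
    iteratedDeriv n (fun y => (starRingEnd ℂ) (f y)) x
      = (starRingEnd ℂ) (iteratedDeriv n f x) := by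
  induction n generalizing f x with
  | zero => simp
  | succ n ih =>
    rw [iteratedDeriv_succ', iteratedDeriv_succ']
    have h1 : (deriv fun y => (starRingEnd ℂ) (f y)) = fun y => (starRingEnd ℂ) (deriv f y) := by
      simp only [starRingEnd_apply]
      exact deriv.star'
    rw [h1]
    exact ih _ _

private lemma contDiff_conj {f : ℝ → ℂ} (hf : ContDiff ℝ ∞ f) :
    ContDiff ℝ ∞ (fun x => (starRingEnd ℂ) (f x)) := Complex.conjCLE.contDiff.comp hf

private lemma itD_add {f g : ℝ → ℂ} (hf : ContDiff ℝ ∞ f) (hg : ContDiff ℝ ∞ g) (n : ℕ) (x : ℝ) :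
    iteratedDeriv n (fun y => f y + g y) x = iteratedDeriv n f x + iteratedDeriv n g x := by
  have := iteratedDerivWithin_add (Set.mem_univ x) uniqueDiffOn_univ
    (((hf.of_le (by exact_mod_cast ((mod_cast le_top) : (n : ℕ∞) ≤ ⊤))).contDiffOn (s := Set.univ) (n := n)).contDiffWithinAt (Set.mem_univ x)) (((hg.of_le (by exact_mod_cast ((mod_cast le_top) : (n : ℕ∞) ≤ ⊤))).contDiffOn).contDiffWithinAt (Set.mem_univ x))
  simpa [iteratedDerivWithin_univ, Pi.add_def] using this

private lemma itD_cmul (c : ℂ) {f : ℝ → ℂ} (hf : ContDiff ℝ ∞ f) (n : ℕ) (x : ℝ) :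
    iteratedDeriv n (fun y => c * f y) x = c * iteratedDeriv n f x := by
  have := iteratedDerivWithin_const_smul (Set.mem_univ x) uniqueDiffOn_univ c
    (((hf.of_le (by exact_mod_cast ((mod_cast le_top) : (n : ℕ∞) ≤ ⊤))).contDiffOn (s := Set.univ) (n := n)).contDiffWithinAt (Set.mem_univ x))
  simpa [iteratedDerivWithin_univ, smul_eq_mul] using this

private lemma itD_zerofun (n : ℕ) : iteratedDeriv n (fun _ : ℝ => (0:ℂ)) = fun _ => 0 := by
  rw [iteratedDeriv_eq_iterate]
  exact Function.iterate_fixed (by funext x; simp) n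

private lemma itD_constf (c : ℂ) (n : ℕ) (x : ℝ) :
    iteratedDeriv (n + 1) (fun _ : ℝ => c) x = 0 := by
  rw [iteratedDeriv_succ']
  simp only [deriv_const']
  exact congrFun (itD_zerofun n) x

private lemma itD_sum {ι : Type*} (t : Finset ι) (F : ι → ℝ → ℂ)
    (hF : ∀ i, ContDiff ℝ ∞ (F i)) (n : ℕ) (x : ℝ) :
    iteratedDeriv n (fun y => ∑ i ∈ t, F i y) x = ∑ i ∈ t, iteratedDeriv n (F i) x := by
  induction t using Finset.cons_induction with
  | empty => simp [itD_zerofun n]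
  | cons i t hi ih =>
    simp only [Finset.sum_cons]
    rw [itD_add (hF i) (ContDiff.sum fun j _ => hF j) n x, ih]

private lemma mulvan : ∀ (j : ℕ) (f g : ℝ → ℂ), ContDiff ℝ ∞ f → ContDiff ℝ ∞ g →
    ∀ (p q : ℕ), (∀ i < p, iteratedDeriv i f 0 = 0) → (∀ i < q, iteratedDeriv i g 0 = 0) →
    j < p + q → iteratedDeriv j (fun x => f x * g x) 0 = 0 := by
  intro j
  induction j with
  | zero =>
    intro f g hf hg p q hp hq hlt
    simp only [iteratedDeriv_zero]
    rcases Nat.lt_or_ge 0 p with h | h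
    · have := hp 0 h; simp only [iteratedDeriv_zero] at this; rw [this, zero_mul]
    · have hq0 : 0 < q := by omega
      have := hq 0 hq0; simp only [iteratedDeriv_zero] at this; rw [this, mul_zero]
  | succ j ih =>
    intro f g hf hg p q hp hq hlt
    rw [iteratedDeriv_succ']
    have hd : deriv (fun x => f x * g x) = fun x => deriv f x * g x + f x * deriv g x := by
      funext x
      exact deriv_fun_mul ((hf.differentiable (by simp)) x)
        ((hg.differentiable (by simp)) x)
    rw [hd]
    have hfd : ContDiff ℝ ∞ (deriv f) := (contDiff_infty_iff_deriv.mp hf).2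
    have hgd : ContDiff ℝ ∞ (deriv g) := (contDiff_infty_iff_deriv.mp hg).2
    have h1 : iteratedDeriv j (fun x => deriv f x * g x) 0 = 0 := by
      apply ih (deriv f) g hfd hg (p - 1) q
      · intro i hi
        have := hp (i + 1) (by omega)
        rwa [iteratedDeriv_succ'] at this
      · exact hq
      · omega
    have h2 : iteratedDeriv j (fun x => f x * deriv g x) 0 = 0 := by
      apply ih f (deriv g) hf hgd p (q - 1)
      · exact hp
      · intro i hi
        have := hq (i + 1) (by omega)
        rwa [iteratedDeriv_succ'] at this
      · omega
    rw [itD_add (hfd.mul hg) (hf.mul hgd) j 0, h1, h2, add_zero]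

private lemma trig_smooth {s' r' : ℕ} (U : ℤ →₀ Matrix (Fin s') (Fin r') ℂ)
    (i : Fin s') (j : Fin r') : ContDiff ℝ ∞ (fun ξ => trigSymM U ξ i j) := by
  have heq : (fun ξ : ℝ => trigSymM U ξ i j)
      = fun ξ : ℝ => ∑ k ∈ U.support, Complex.exp (-Complex.I * (k : ℂ) * (ξ : ℂ)) * U k i j := by
    funext ξ
    rw [trigSymM, Finsupp.sum, Matrix.sum_apply]
    simp [Matrix.smul_apply, smul_eq_mul]
  rw [heq]
  apply ContDiff.sum
  intro k _
  apply ContDiff.mul _ contDiff_const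
  exact Complex.contDiff_exp.comp (contDiff_const.mul Complex.ofRealCLM.contDiff)

/-- If `{å; b̊}_{(ε₁,…,ε_s)}` is a quasi-tight `d`-framelet filter bank (first equation),
`φ̊̂` (smooth, the Fourier transform of a compactly supported `L₂` vector function)
satisfies the refinement equation `φ̊̂(dξ) = å̂(ξ)φ̊̂(ξ)`, and `ψ̂(dξ) = b̊̂(ξ)φ̊̂(ξ)` has
`m` vanishing moments, then `‖φ̊̂(ξ)‖² = ‖φ̊̂(0)‖² + O(|ξ|^{2m})` as `ξ → 0`. -/
theorem refinable_norm_flat (d : ℕ) (hd : 2 ≤ d) (r s : ℕ)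
    (a : ℤ →₀ Matrix (Fin r) (Fin r) ℂ) (b : ℤ →₀ Matrix (Fin s) (Fin r) ℂ)
    (ε : Fin s → ℝ) (hε : ∀ i, ε i = 1 ∨ ε i = -1)
    (hfb : ∀ ξ : ℝ, (trigSymM a ξ).conjTranspose * trigSymM a ξ +
        (trigSymM b ξ).conjTranspose * Matrix.diagonal (fun i => (ε i : ℂ)) * trigSymM b ξ
        = 1)
    (φ : Fin r → ℝ → ℂ) (hφ : ∀ i, ContDiff ℝ (⊤ : ℕ∞) (φ i))
    (href : ∀ ξ : ℝ, ∀ i, φ i ((d : ℝ) * ξ) = ∑ j, trigSymM a ξ i j * φ j ξ)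
    (ψ : Fin s → ℝ → ℂ)
    (hψ : ∀ ξ : ℝ, ∀ i, ψ i ((d : ℝ) * ξ) = ∑ j, trigSymM b ξ i j * φ j ξ)
    (m : ℕ) (hvm : ∀ i : Fin s, ∀ j < m, iteratedDeriv j (ψ i) 0 = 0) :
    ∀ j < 2 * m, iteratedDeriv j (fun ξ : ℝ => ∑ i, (starRingEnd ℂ) (φ i ξ) * φ i ξ) 0
      = iteratedDeriv j (fun _ : ℝ => ∑ i, (starRingEnd ℂ) (φ i 0) * φ i 0) 0 := by
  intro j hj
  have hdne : (d : ℝ) ≠ 0 := by positivity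
  have hφ' : ∀ i, ContDiff ℝ ∞ (φ i) := fun i => (hφ i).of_le (mod_cast le_top)
  -- smoothness of ψ
  have hψsm : ∀ i, ContDiff ℝ ∞ (ψ i) := by
    intro i
    have heq : ψ i = fun x => ∑ k, trigSymM b (x / d) i k * φ k (x / d) := by
      funext x
      have := hψ (x / d) i
      rwa [mul_div_cancel₀ x hdne] at this
    rw [heq]
    apply ContDiff.sum
    intro k _
    exact ((trig_smooth b i k).comp (contDiff_id.div_const _)).mul
      ((hφ' k).comp (contDiff_id.div_const _))
  -- the key filter bank identity
  have key : ∀ ξ : ℝ,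
      (∑ i, (starRingEnd ℂ) (φ i ξ) * φ i ξ)
      = (∑ i, (starRingEnd ℂ) (φ i ((d : ℝ) * ξ)) * φ i ((d : ℝ) * ξ))
        + ∑ i, (ε i : ℂ) * ((starRingEnd ℂ) (ψ i ((d : ℝ) * ξ)) * ψ i ((d : ℝ) * ξ)) := by
    intro ξ
    set A := trigSymM a ξ with hA
    set B := trigSymM b ξ with hB
    set D : Matrix (Fin s) (Fin s) ℂ := Matrix.diagonal (fun i => (ε i : ℂ)) with hD
    set v : Fin r → ℂ := fun k => φ k ξ with hv
    have hφv : (fun i => φ i ((d : ℝ) * ξ)) = A.mulVec v := by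
      funext i
      rw [href ξ i]
      simp only [Matrix.mulVec, dotProduct]
      rfl
    have hψv : (fun i => ψ i ((d : ℝ) * ξ)) = B.mulVec v := by
      funext i
      rw [hψ ξ i]
      simp only [Matrix.mulVec, dotProduct]
      rfl
    have e1 : (∑ i, (starRingEnd ℂ) (φ i ((d : ℝ) * ξ)) * φ i ((d : ℝ) * ξ))
        = dotProduct (star (A.mulVec v)) (A.mulVec v) := by
      rw [← hφv]
      simp only [dotProduct, Pi.star_apply, starRingEnd_apply]
    have e2 : (∑ i, (ε i : ℂ) * ((starRingEnd ℂ) (ψ i ((d : ℝ) * ξ)) * ψ i ((d : ℝ) * ξ)))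
        = dotProduct (star (B.mulVec v)) (D.mulVec (B.mulVec v)) := by
      rw [← hψv]
      simp only [dotProduct, Pi.star_apply, hD, Matrix.mulVec_diagonal,
        starRingEnd_apply]
      exact Finset.sum_congr rfl fun i _ => by ring
    have e3 : (∑ i, (starRingEnd ℂ) (φ i ξ) * φ i ξ) = dotProduct (star v) v := by
      simp only [dotProduct, Pi.star_apply, starRingEnd_apply, hv]
    rw [e1, e2, e3]
    have expand : dotProduct (star v) ((Aᴴ * A + Bᴴ * D * B).mulVec v)
        = dotProduct (star (A.mulVec v)) (A.mulVec v)
          + dotProduct (star (B.mulVec v)) (D.mulVec (B.mulVec v)) := by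
      rw [Matrix.add_mulVec, dotProduct_add]
      congr 1
      · rw [← Matrix.mulVec_mulVec, Matrix.dotProduct_mulVec, Matrix.star_mulVec,
          Matrix.dotProduct_mulVec]
      · rw [Matrix.mul_assoc, ← Matrix.mulVec_mulVec, ← Matrix.mulVec_mulVec,
          Matrix.dotProduct_mulVec (star (B.mulVec v)), Matrix.star_mulVec,
          Matrix.dotProduct_mulVec, Matrix.dotProduct_mulVec]
    rw [← expand, hfb ξ, Matrix.one_mulVec]
  -- conclude
  rcases Nat.eq_zero_or_pos j with rfl | hj1
  · simp only [iteratedDeriv_zero]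
  obtain ⟨j, rfl⟩ : ∃ k, j = k + 1 := ⟨j - 1, by omega⟩
  rw [itD_constf]
  -- smoothness of h
  set h : ℝ → ℂ := fun ξ => ∑ i, (starRingEnd ℂ) (φ i ξ) * φ i ξ with hh
  have hhc : ContDiff ℝ ∞ h := by
    apply ContDiff.sum
    intro i _
    exact (contDiff_conj (hφ' i)).mul (hφ' i)
  -- vanishing of the g part
  have hqsm : ∀ i : Fin s, ContDiff ℝ ∞ (fun ξ : ℝ => ψ i ((d : ℝ) * ξ)) := fun i =>
    (hψsm i).comp (contDiff_const.mul contDiff_id)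
  have hqvan : ∀ i : Fin s, ∀ l, l < m → iteratedDeriv l (fun ξ : ℝ => ψ i ((d : ℝ) * ξ)) 0 = 0 := by
    intro i l hl
    have := congrFun (iteratedDeriv_comp_const_smul (n := l) ((hψsm i).of_le (by exact_mod_cast ((mod_cast le_top) : (l : ℕ∞) ≤ ⊤))) (d : ℝ)) 0
    rw [this, mul_zero, hvm i l hl, smul_zero]
  have hGsm : ∀ i : Fin s, ContDiff ℝ ∞
      (fun ξ : ℝ => (ε i : ℂ) * ((starRingEnd ℂ) (ψ i ((d : ℝ) * ξ)) * ψ i ((d : ℝ) * ξ))) :=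
    fun i => contDiff_const.mul ((contDiff_conj (hqsm i)).mul (hqsm i))
  have hgvan : iteratedDeriv (j + 1) (fun ξ : ℝ =>
      ∑ i, (ε i : ℂ) * ((starRingEnd ℂ) (ψ i ((d : ℝ) * ξ)) * ψ i ((d : ℝ) * ξ))) 0 = 0 := by
    rw [itD_sum Finset.univ _ hGsm (j + 1) 0]
    apply Finset.sum_eq_zero
    intro i _
    rw [itD_cmul _ ((contDiff_conj (hqsm i)).mul (hqsm i)) (j + 1) 0]
    rw [mulvan (j + 1) _ _ (contDiff_conj (hqsm i)) (hqsm i) m m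
      (fun l hl => by rw [itD_conj, hqvan i l hl, map_zero])
      (hqvan i) (by omega), mul_zero]
  -- scaling argument
  have hcomp := congrFun (iteratedDeriv_comp_const_smul (F := ℂ)
    (hhc.of_le (by exact_mod_cast ((mod_cast le_top) : ((j+1 : ℕ) : ℕ∞) ≤ ⊤) : ((j+1 : ℕ) : WithTop ℕ∞) ≤ ∞)) (d : ℝ)) 0
  have hc1 : ContDiff ℝ ∞ (fun ξ : ℝ => h ((d : ℝ) * ξ)) :=
    hhc.comp (contDiff_const.mul contDiff_id)
  have hsplit : iteratedDeriv (j + 1) h 0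
      = iteratedDeriv (j + 1) (fun ξ => h ((d : ℝ) * ξ)) 0
        + iteratedDeriv (j + 1) (fun ξ : ℝ =>
            ∑ i, (ε i : ℂ) * ((starRingEnd ℂ) (ψ i ((d : ℝ) * ξ)) * ψ i ((d : ℝ) * ξ))) 0 := by
    have hadd := itD_add (g := fun ξ : ℝ =>
        ∑ i, (ε i : ℂ) * ((starRingEnd ℂ) (ψ i ((d : ℝ) * ξ)) * ψ i ((d : ℝ) * ξ)))
      hc1 (ContDiff.sum fun i _ => hGsm i) (j + 1) 0
    rw [← hadd]
    exact congrFun (congrArg (iteratedDeriv (j + 1)) (funext fun ξ => key ξ)) 0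
  rw [hcomp, mul_zero, hgvan, add_zero] at hsplit
  have hpow : ((d : ℝ) ^ (j + 1) - 1) • iteratedDeriv (j + 1) h 0 = 0 := by
    rw [sub_smul, one_smul, ← hsplit]
    abel
  have hne : (d : ℝ) ^ (j + 1) - 1 ≠ 0 := by
    have h2 : (2 : ℝ) ≤ (d : ℝ) := by exact_mod_cast hd
    have : (2 : ℝ) ^ (j + 1) ≤ (d : ℝ) ^ (j + 1) := pow_le_pow_left₀ (by norm_num) h2 _
    have h4 : (2 : ℝ) ≤ (2 : ℝ) ^ (j + 1) := by
      calc (2:ℝ) = 2 ^ 1 := (pow_one 2).symm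
      _ ≤ 2 ^ (j + 1) := pow_le_pow_right₀ (by norm_num) (by omega)
    nlinarith
  have := (smul_eq_zero.mp hpow).resolve_left hne
  rw [hh] at this
  exact this
end
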